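/- Let P and Q be probability distributions on a finite set X with statistical distance SD(P,Q) < ε. Then the probability, when x is sampled from P, that (1 - √ε)·P(x) < Q(x) < (1 + √ε)·P(x) is at least 1 - 2√ε. -/
import Mathlib


open scoped Classical

/-- Fact 2.6 of Sahai-Vadhan: if SD(P,Q) < ε then with probability at least
`1 - 2√ε` over `x ← P`, `(1-√ε)·P(x) < Q(x) < (1+√ε)·P(x)`. -/
theorem stmt_0 {X : Type*} [Fintype X] (P Q : X → ℝ) (ε : ℝ)
    (hε0 : 0 < ε) (hε1 : ε ≤ 1)
    (hP : ∀ x, 0 ≤ P x) (hQ : ∀ x, 0 ≤ Q x)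
    (hPsum : ∑ x, P x = 1) (hQsum : ∑ x, Q x = 1)
    (hSD : (1/2) * ∑ x, |P x - Q x| < ε) :
    1 - 2 * Real.sqrt ε ≤
      ∑ x ∈ Finset.univ.filter
        (fun x => (1 - Real.sqrt ε) * P x < Q x ∧ Q x < (1 + Real.sqrt ε) * P x),
        P x := by
  set s := Real.sqrt ε with hsdef
  have hs0 : 0 < s := Real.sqrt_pos.mpr hε0
  have hss : s * s = ε := Real.mul_self_sqrt hε0.le
  -- key: for f summing to 0, any partial sum is at most half the abs sum
  have key : ∀ f : X → ℝ, ∑ x, f x = 0 →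
      ∀ S : Finset X, ∑ x ∈ S, f x ≤ (1/2) * ∑ x, |f x| := by
    intro f hf S
    calc ∑ x ∈ S, f x
        ≤ ∑ x ∈ S, max (f x) 0 := Finset.sum_le_sum fun x _ => le_max_left _ _
      _ ≤ ∑ x, max (f x) 0 :=
          Finset.sum_le_sum_of_subset_of_nonneg (Finset.subset_univ S)
            (fun x _ _ => le_max_right _ _)
      _ = (1/2) * ∑ x, (f x + |f x|) := by
          rw [Finset.mul_sum]
          refine Finset.sum_congr rfl fun x _ => ?_
          rcases le_or_gt 0 (f x) with h | h
          · rw [max_eq_left h, abs_of_nonneg h]; ring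
          · rw [max_eq_right h.le, abs_of_neg h]; ring
      _ = (1/2) * ∑ x, |f x| := by
          rw [Finset.sum_add_distrib, hf]; ring
  set B₁ : Finset X := Finset.univ.filter (fun x => Q x ≤ (1 - s) * P x) with hB₁
  set B₂ : Finset X := Finset.univ.filter (fun x => (1 + s) * P x ≤ Q x) with hB₂
  have hPQ0 : ∑ x, (P x - Q x) = 0 := by
    rw [Finset.sum_sub_distrib, hPsum, hQsum]; ring
  have hQP0 : ∑ x, (Q x - P x) = 0 := by
    rw [Finset.sum_sub_distrib, hPsum, hQsum]; ring
  have habs : ∑ x, |Q x - P x| = ∑ x, |P x - Q x| := by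
    refine Finset.sum_congr rfl fun x _ => abs_sub_comm _ _
  have h1 : ∑ x ∈ B₁, P x ≤ s := by
    have hlt : s * ∑ x ∈ B₁, P x < s * s := by
      rw [hss]
      calc s * ∑ x ∈ B₁, P x = ∑ x ∈ B₁, s * P x := by rw [Finset.mul_sum]
        _ ≤ ∑ x ∈ B₁, (P x - Q x) := by
            refine Finset.sum_le_sum fun x hx => ?_
            have hx' : Q x ≤ (1 - s) * P x := (Finset.mem_filter.mp hx).2
            nlinarith
        _ ≤ (1/2) * ∑ x, |P x - Q x| := key _ hPQ0 _
        _ < ε := hSD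
    exact le_of_lt ((mul_lt_mul_iff_right₀ hs0).mp hlt)
  have h2 : ∑ x ∈ B₂, P x ≤ s := by
    have hlt : s * ∑ x ∈ B₂, P x < s * s := by
      rw [hss]
      calc s * ∑ x ∈ B₂, P x = ∑ x ∈ B₂, s * P x := by rw [Finset.mul_sum]
        _ ≤ ∑ x ∈ B₂, (Q x - P x) := by
            refine Finset.sum_le_sum fun x hx => ?_
            have hx' : (1 + s) * P x ≤ Q x := (Finset.mem_filter.mp hx).2
            nlinarith
        _ ≤ (1/2) * ∑ x, |Q x - P x| := key _ hQP0 _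
        _ < ε := by rw [habs]; exact hSD
    exact le_of_lt ((mul_lt_mul_iff_right₀ hs0).mp hlt)
  set cond : X → Prop := fun x => (1 - s) * P x < Q x ∧ Q x < (1 + s) * P x with hcond
  have hsplit : ∑ x ∈ Finset.univ.filter cond, P x
      + ∑ x ∈ Finset.univ.filter (fun x => ¬ cond x), P x = 1 := by
    rw [Finset.sum_filter_add_sum_filter_not, hPsum]
  have hbadsub : Finset.univ.filter (fun x => ¬ cond x) ⊆ B₁ ∪ B₂ := by
    intro x hx
    have hx' := (Finset.mem_filter.mp hx).2
    simp only [hcond, not_and, not_lt] at hx'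
    rcases le_or_gt (Q x) ((1 - s) * P x) with h | h
    · exact Finset.mem_union_left _ (Finset.mem_filter.mpr ⟨Finset.mem_univ _, h⟩)
    · exact Finset.mem_union_right _ (Finset.mem_filter.mpr ⟨Finset.mem_univ _, hx' h⟩)
  have hbad : ∑ x ∈ Finset.univ.filter (fun x => ¬ cond x), P x ≤ 2 * s := by
    calc ∑ x ∈ Finset.univ.filter (fun x => ¬ cond x), P x
        ≤ ∑ x ∈ B₁ ∪ B₂, P x :=
          Finset.sum_le_sum_of_subset_of_nonneg hbadsub (fun x _ _ => hP x)
      _ ≤ ∑ x ∈ B₁, P x + ∑ x ∈ B₂, P x := by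
          have := Finset.sum_union_inter (s₁ := B₁) (s₂ := B₂) (f := P)
          have hnn : 0 ≤ ∑ x ∈ B₁ ∩ B₂, P x :=
            Finset.sum_nonneg fun x _ => hP x
          linarith
      _ ≤ 2 * s := by linarith
  linarith
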